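/- arXiv:2011.05234 — 2 statements merged into one kernel-verified Lean document; each statement's English description precedes it below -/
import Mathlib

section
/- Let F be the free group on a finite set S, let f : F → Sym(n−1) and g : F → Sym(n) be homomorphisms with g transitive, and let D = {(x,x) : x ∈ [n−1]} ⊆ [n−1]×[n] be the diagonal. Then for every orbit X of the product action of F on [n−1]×[n], |D ∩ X| ≤ |X|/2. -/
/-!
A point of the diagonal is determined by its first coordinate, so `|D ∩ X|` is at most the size
`[F : stab x]` of the projection of `X` to `[n-1]`. On the other hand
`|X| = [F : stab x ⊓ stab y] = [stab x : stab x ⊓ stab y] · [F : stab x]`, and this relative index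
is at least `2`: if `stab x ≤ stab y`, the orbit of `y`, which is all of `[n]` by transitivity,
would have at most `[F : stab x] ≤ n - 1` points.
-/

theorem Set.ncard_inter_graph_le_ncard_image_fst {α β : Type*} {s : Set (α × β)} (hs : s.Finite)
    (ι : α → β) :
    {q | q ∈ s ∧ ι q.1 = q.2}.ncard ≤ (Prod.fst '' s).ncard := by
  have hinj : Set.InjOn Prod.fst {q | q ∈ s ∧ ι q.1 = q.2} := fun p hp q hq h =>
    Prod.ext h (hp.2.symm.trans ((congrArg ι h).trans hq.2))
  rw [← hinj.ncard_image]
  exact Set.ncard_le_ncard (Set.image_mono fun q hq => hq.1) (hs.image _)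

namespace MulAction

variable {G α β : Type*} [Group G] [MulAction G α] [MulAction G β]

theorem stabilizer_prod (p : α × β) :
    stabilizer G p = stabilizer G p.1 ⊓ stabilizer G p.2 := by
  ext w
  simp [Prod.ext_iff]

theorem not_stabilizer_le_stabilizer [Finite α] [IsPretransitive G β]
    (hcard : Nat.card α < Nat.card β) (a : α) (b : β) :
    ¬ stabilizer G a ≤ stabilizer G b := by
  intro hle
  have : (stabilizer G a).FiniteIndex :=
    ⟨by rw [index_stabilizer]; exact Set.ncard_ne_zero_of_mem (mem_orbit_self a)⟩
  have hindex := Subgroup.index_antitone hle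
  rw [index_stabilizer_of_transitive, index_stabilizer] at hindex
  have horbit := Set.ncard_le_card (orbit G a)
  omega

theorem two_mul_ncard_orbit_fst_le_ncard_orbit [Finite α] [Finite β]
    [IsPretransitive G β] (hcard : Nat.card α < Nat.card β) (p : α × β) :
    2 * (orbit G p.1).ncard ≤ (orbit G p).ncard := by
  have hsplit : (stabilizer G p.2).relIndex (stabilizer G p.1) * (stabilizer G p.1).index =
      (orbit G p).ncard := by
    rw [← Subgroup.inf_relIndex_left, Subgroup.relIndex_mul_index inf_le_left,
      ← stabilizer_prod, index_stabilizer]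
  have hne_zero : (stabilizer G p.2).relIndex (stabilizer G p.1) ≠ 0 :=
    left_ne_zero_of_mul (hsplit ▸ Set.ncard_ne_zero_of_mem (mem_orbit_self p))
  have hne_one : (stabilizer G p.2).relIndex (stabilizer G p.1) ≠ 1 :=
    mt Subgroup.relIndex_eq_one.1 (not_stabilizer_le_stabilizer hcard p.1 p.2)
  rw [← hsplit, ← index_stabilizer]
  exact Nat.mul_le_mul_right _ (by omega)

theorem two_mul_ncard_orbit_inter_graph_le [Finite α] [Finite β] [IsPretransitive G β]
    (hcard : Nat.card α < Nat.card β) (ι : α → β) (p : α × β) :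
    2 * {q | q ∈ orbit G p ∧ ι q.1 = q.2}.ncard ≤ (orbit G p).ncard := by
  calc 2 * {q | q ∈ orbit G p ∧ ι q.1 = q.2}.ncard
      ≤ 2 * (Prod.fst '' orbit G p).ncard :=
        Nat.mul_le_mul_left 2 (Set.ncard_inter_graph_le_ncard_image_fst (Set.toFinite _) ι)
    _ ≤ 2 * (orbit G p.1).ncard :=
        Nat.mul_le_mul_left 2 <| Set.ncard_le_ncard
          fun _ ⟨_, hq, hfst⟩ => hfst ▸ fst_mem_orbit_of_mem_orbit hq
    _ ≤ (orbit G p).ncard := two_mul_ncard_orbit_fst_le_ncard_orbit hcard p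

end MulAction

theorem stmt_6_general {S : Type*} {n : ℕ}
    (f : FreeGroup S →* Equiv.Perm (Fin (n - 1)))
    (g : FreeGroup S →* Equiv.Perm (Fin n))
    (hg : ∀ y y' : Fin n, ∃ w : FreeGroup S, g w y = y')
    (p₀ : Fin (n - 1) × Fin n) :
    2 * Set.ncard {p : Fin (n - 1) × Fin n |
        (∃ w : FreeGroup S, (f w p₀.1, g w p₀.2) = p) ∧
          Fin.castLE (Nat.sub_le n 1) p.1 = p.2}
      ≤ Set.ncard {p : Fin (n - 1) × Fin n |
          ∃ w : FreeGroup S, (f w p₀.1, g w p₀.2) = p} := by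
  let _ := MulAction.compHom (Fin (n - 1)) f
  let _ := MulAction.compHom (Fin n) g
  have : MulAction.IsPretransitive (FreeGroup S) (Fin n) := ⟨hg⟩
  have hcard : Nat.card (Fin (n - 1)) < Nat.card (Fin n) := by
    simp only [Nat.card_eq_fintype_card, Fintype.card_fin]
    exact Nat.sub_lt (Fin.pos p₀.2) one_pos
  exact MulAction.two_mul_ncard_orbit_inter_graph_le hcard (Fin.castLE (Nat.sub_le n 1)) p₀

/-- Let `f : F_S →* Sym(n-1)`, `g : F_S →* Sym(n)` with `g` transitive, and let
`D` be the diagonal in `[n-1] × [n]`. For every orbit `X` of the product action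
(the orbit of any point `p₀`), we have `|D ∩ X| ≤ |X| / 2`. -/
theorem stmt_6 {S : Type*} [Fintype S] {n : ℕ}
    (f : FreeGroup S →* Equiv.Perm (Fin (n - 1)))
    (g : FreeGroup S →* Equiv.Perm (Fin n))
    (hg : ∀ y y' : Fin n, ∃ w : FreeGroup S, g w y = y')
    (p₀ : Fin (n - 1) × Fin n) :
    2 * Set.ncard {p : Fin (n - 1) × Fin n |
        (∃ w : FreeGroup S, (f w p₀.1, g w p₀.2) = p) ∧
          Fin.castLE (Nat.sub_le n 1) p.1 = p.2}
      ≤ Set.ncard {p : Fin (n - 1) × Fin n |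
          ∃ w : FreeGroup S, (f w p₀.1, g w p₀.2) = p} :=
  stmt_6_general f g hg p₀
end

section
/- Let M be a deterministic oracle algorithm on S-graphs on [n] that makes exactly q queries, where each query reveals one labelled edge. For r ≥ 0, the number of distinct 'query transcripts' (partial S-graphs H with r(H) = r that can arise as the set of edges queried on some input) is at most C(q,r)·n^r·(2q)^{q−r}, where r(H) = |V(H)| − (number of connected components of H). -/
/-!
Record a transcript by one symbol per query. If the answer to query `k` is already reachable from
the queried vertex in the graph of the earlier queries, the rank does not grow, and the answer is
one of the `2k + 1` vertices seen so far (the earlier endpoints and the queried vertex), so it is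
recorded by its position in that list: one of `2q` symbols. Otherwise the rank grows by one and
the answer is recorded itself: one of `n` symbols. The machine being deterministic, the symbols
determine the transcript, and a transcript of rank `r` uses exactly `r` symbols of the second
kind; there are `C(q,r) · n^r · (2q)^(q-r)` such symbol sequences.
-/

open scoped Classical

/-- A query–answer pair: the query `(x, (s, b))` asks for `s^{±1}_G x`
(`b = true` for `s`, `b = false` for `s⁻¹`), and the answer is a vertex. -/
abbrev QA (S : Type*) (n : ℕ) := (Fin n × (S × Bool)) × Fin n

/-- `rankOf t = |V(H)| - (number of connected components of H)`, where `H` is the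
partial `S`-graph whose edges are the queried edges recorded in the transcript `t`. -/
noncomputable def rankOf {S : Type*} {n : ℕ} (t : List (QA S n)) : ℕ :=
  let V : Finset (Fin n) :=
    (t.map fun e => e.1.1).toFinset ∪ (t.map fun e => e.2).toFinset
  let G : SimpleGraph (Fin n) :=
    SimpleGraph.fromRel fun a b => ∃ e ∈ t, e.1.1 = a ∧ e.2 = b
  V.card - (V.image fun v => G.connectedComponentMk v).card

/-- The answer to a query in the `S`-graph given by the permutations `G`. -/
def answerQ {S : Type*} {n : ℕ} (G : S → Equiv.Perm (Fin n))
    (q : Fin n × (S × Bool)) : Fin n :=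
  if q.2.2 then G q.2.1 q.1 else (G q.2.1)⁻¹ q.1

/-- The transcript of the run of the deterministic oracle machine with (adaptive)
query strategy `next` on the `S`-graph `G`, after a given number of queries. -/
def runTranscript {S : Type*} {n : ℕ} (next : List (QA S n) → Fin n × (S × Bool))
    (G : S → Equiv.Perm (Fin n)) : ℕ → List (QA S n)
  | 0 => []
  | q + 1 =>
      let t := runTranscript next G q
      t ++ [(next t, answerQ G (next t))]

open Finset

namespace SimpleGraph

variable {V : Type*} {G G' : SimpleGraph V} {x y u v : V}

theorem reachable_sup_edge_iff :
    (G ⊔ edge x y).Reachable u v ↔ G.Reachable u v ∨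
      (G.Reachable u x ∧ G.Reachable y v) ∨ (G.Reachable u y ∧ G.Reachable x v) := by
  constructor
  · rintro ⟨w⟩
    induction w with
    | nil => exact .inl .rfl
    | cons h _ ih =>
      rw [sup_adj, edge_adj] at h
      rcases h with h | ⟨⟨rfl, rfl⟩ | ⟨rfl, rfl⟩, -⟩
      · have := h.reachable
        grind [Reachable.trans]
      · grind [Reachable.refl]
      · grind [Reachable.refl]
  · have hxy : (G ⊔ edge x y).Reachable x y := by
      by_cases h : x = y
      · exact h ▸ .rfl
      · exact Adj.reachable (.inr ((edge_adj ..).2 ⟨.inl ⟨rfl, rfl⟩, h⟩))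
    have hmono := fun {a b : V} (h : G.Reachable a b) => h.mono (le_sup_left : G ≤ G ⊔ edge x y)
    rintro (h | ⟨h₁, h₂⟩ | ⟨h₁, h₂⟩)
    · exact hmono h
    · exact ((hmono h₁).trans hxy).trans (hmono h₂)
    · exact ((hmono h₁).trans hxy.symm).trans (hmono h₂)

theorem eq_of_reachable_of_forall_not_adj (hv : ∀ w, ¬G.Adj v w) (h : G.Reachable v u) :
    v = u := by
  obtain ⟨_ | ⟨hadj, _⟩⟩ := h
  · rfl
  · exact (hv _ hadj).elim

noncomputable def rankOn (G : SimpleGraph V) (A : Finset V) : ℕ :=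
  #A - #(A.image G.connectedComponentMk)

theorem card_image_connectedComponentMk_of_le (hle : G ≤ G') {A : Finset V}
    (h : ∀ u ∈ A, ∀ v ∈ A, G'.Reachable u v → G.Reachable u v) :
    #(A.image G'.connectedComponentMk) = #(A.image G.connectedComponentMk) := by
  have : A.image G'.connectedComponentMk =
      (A.image G.connectedComponentMk).image (ConnectedComponent.map (Hom.ofLE hle)) := by
    rw [image_image]; rfl
  rw [this]
  refine card_image_of_injOn ?_
  rintro _ hc₁ _ hc₂ heq
  obtain ⟨u, hu, rfl⟩ := mem_image.1 hc₁
  obtain ⟨v, hv, rfl⟩ := mem_image.1 hc₂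
  exact ConnectedComponent.sound (h u hu v hv (ConnectedComponent.exact heq))

theorem rankOn_insert [DecidableEq V] {A : Finset V} (h : ∀ w, G.Adj v w → v ∈ A) :
    G.rankOn (insert v A) = G.rankOn A := by
  by_cases hv : v ∈ A
  · rw [insert_eq_of_mem hv]
  have hnew : G.connectedComponentMk v ∉ A.image G.connectedComponentMk := by
    simp only [mem_image, ConnectedComponent.eq, not_exists, not_and]
    intro u hu huv
    exact hv (eq_of_reachable_of_forall_not_adj (fun w hw => hv (h w hw)) huv.symm ▸ hu)
  have := card_image_le (s := A) (f := G.connectedComponentMk)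
  rw [rankOn, rankOn, image_insert, card_insert_of_notMem hv, card_insert_of_notMem hnew]
  omega

theorem rankOn_sup_edge [DecidableEq V] {A : Finset V} (hx : x ∈ A) (hy : y ∈ A) :
    (G ⊔ edge x y).rankOn A = G.rankOn A + if G.Reachable x y then 0 else 1 := by
  have hA := card_image_le (s := A) (f := G.connectedComponentMk)
  by_cases hxy : G.Reachable x y
  · rw [rankOn, rankOn, if_pos hxy, add_zero, card_image_connectedComponentMk_of_le le_sup_left]
    intro u _ v _ huv
    grind [reachable_sup_edge_iff, Reachable.trans, Reachable.symm]
  -- Splitting off the component of `x`: on the rest of `A` the new edge changes nothing.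
  set B := A.filter fun w => ¬G.Reachable x w
  have hxB : G.connectedComponentMk x ∉ B.image G.connectedComponentMk := by
    intro hmem
    obtain ⟨a, ha, hax⟩ := mem_image.1 hmem
    exact (mem_filter.1 ha).2 (ConnectedComponent.exact hax).symm
  have himage : A.image G.connectedComponentMk =
      insert (G.connectedComponentMk x) (B.image G.connectedComponentMk) := by
    ext c
    simp only [B, mem_insert, mem_image, mem_filter]
    constructor
    · rintro ⟨a, ha, rfl⟩
      by_cases hxa : G.Reachable x a
      · exact .inl (ConnectedComponent.sound hxa.symm)
      · exact .inr ⟨a, ⟨ha, hxa⟩, rfl⟩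
    · rintro (rfl | ⟨a, ⟨ha, -⟩, rfl⟩)
      exacts [⟨x, hx, rfl⟩, ⟨a, ha, rfl⟩]
  have himage' : A.image (G ⊔ edge x y).connectedComponentMk =
      B.image (G ⊔ edge x y).connectedComponentMk := by
    ext c
    simp only [B, mem_image, mem_filter]
    constructor
    · rintro ⟨a, ha, rfl⟩
      by_cases hxa : G.Reachable x a
      · refine ⟨y, ⟨hy, hxy⟩, ConnectedComponent.sound ?_⟩
        exact reachable_sup_edge_iff.2 (.inr (.inr ⟨.rfl, hxa⟩))
      · exact ⟨a, ⟨ha, hxa⟩, rfl⟩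
    · rintro ⟨a, ⟨ha, -⟩, rfl⟩
      exact ⟨a, ha, rfl⟩
  have hB : #(B.image (G ⊔ edge x y).connectedComponentMk) =
      #(B.image G.connectedComponentMk) := by
    refine card_image_connectedComponentMk_of_le le_sup_left fun u hu v hv huv => ?_
    simp only [B, mem_filter] at hu hv
    grind [reachable_sup_edge_iff, Reachable.symm]
  rw [himage, card_insert_of_notMem hxB] at hA
  rw [rankOn, rankOn, himage', hB, himage, card_insert_of_notMem hxB, if_neg hxy]
  omega

theorem rankOn_sup_edge_insert [DecidableEq V] {A : Finset V} (hA : ∀ u v, G.Adj u v → u ∈ A) :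
    (G ⊔ edge x y).rankOn (insert x (insert y A)) =
      G.rankOn A + if G.Reachable x y then 0 else 1 := by
  rw [rankOn_sup_edge (mem_insert_self _ _) (mem_insert_of_mem (mem_insert_self _ _)),
    rankOn_insert fun w h => mem_insert_of_mem (hA _ w h), rankOn_insert (hA _)]

end SimpleGraph

theorem card_filter_card_isLeft_eq {ι α β : Type*} [Fintype ι] [DecidableEq ι] [Fintype α]
    [Fintype β] (r : ℕ) :
    #{f : ι → α ⊕ β | #{i | (f i).isLeft} = r} =
      (Fintype.card ι).choose r * Fintype.card α ^ r * Fintype.card β ^ (Fintype.card ι - r) := by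
  set lefts : (ι → α ⊕ β) → Finset ι := fun f => {i | (f i).isLeft}
  rw [card_eq_sum_card_fiberwise (f := lefts) (t := powersetCard r univ)
    (fun f hf => by simpa [mem_powersetCard] using hf)]
  have hfiber (I : Finset ι) (hI : I ∈ powersetCard r univ) :
      #((univ.filter fun f => #(lefts f) = r).filter fun f => lefts f = I) =
        Fintype.card α ^ r * Fintype.card β ^ (Fintype.card ι - r) := by
    rw [mem_powersetCard] at hI
    have : ((univ.filter fun f => #(lefts f) = r).filter fun f => lefts f = I) =
        Fintype.piFinset fun i => if i ∈ I then univ.map .inl else univ.map .inr := by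
      ext f
      have hmem (i : ι) : (f i ∈ if i ∈ I then univ.map .inl else univ.map .inr) ↔
          ((f i).isLeft ↔ i ∈ I) := by
        split_ifs with hi <;> cases f i <;> simp [hi]
      have hlefts : lefts f = I ↔ ∀ i, ((f i).isLeft ↔ i ∈ I) := by simp [lefts, Finset.ext_iff]
      simp only [mem_filter, mem_univ, true_and, Fintype.mem_piFinset, hmem, ← hlefts]
      exact ⟨And.right, fun h => ⟨h ▸ hI.2, h⟩⟩
    simp only [this, Fintype.card_piFinset, apply_ite card, card_map, card_univ]
    rw [prod_ite, prod_const, prod_const]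
    simp [hI.2, filter_notMem_eq_sdiff, card_univ_sdiff]
  rw [sum_congr rfl hfiber, sum_const, card_powersetCard, card_univ, smul_eq_mul, mul_assoc]

open SimpleGraph

section Transcript

variable {S : Type*} {n : ℕ}

def queryVertices (t : List (QA S n)) : Finset (Fin n) :=
  (t.map fun e => e.1.1).toFinset ∪ (t.map fun e => e.2).toFinset

def queryGraph (t : List (QA S n)) : SimpleGraph (Fin n) :=
  SimpleGraph.fromRel fun a b => ∃ e ∈ t, e.1.1 = a ∧ e.2 = b

theorem rankOf_eq_rankOn (t : List (QA S n)) :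
    rankOf t = (queryGraph t).rankOn (queryVertices t) := rfl

theorem mem_queryVertices_of_adj {t : List (QA S n)} {u v : Fin n}
    (h : (queryGraph t).Adj u v) : u ∈ queryVertices t := by
  simp only [queryGraph, fromRel_adj] at h
  simp only [queryVertices, mem_union, List.mem_toFinset, List.mem_map]
  grind

theorem queryVertices_append_singleton (t : List (QA S n)) (e : QA S n) :
    queryVertices (t ++ [e]) = insert e.1.1 (insert e.2 (queryVertices t)) := by
  ext
  simp only [queryVertices, List.map_append, List.map_cons, List.map_nil, List.toFinset_append,
    List.toFinset_cons, List.toFinset_nil, mem_union, mem_insert, List.mem_toFinset]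
  grind

theorem queryGraph_append_singleton (t : List (QA S n)) (e : QA S n) :
    queryGraph (t ++ [e]) = queryGraph t ⊔ edge e.1.1 e.2 := by
  ext a b
  simp only [queryGraph, fromRel_adj, sup_adj, edge_adj, List.mem_append, List.mem_singleton]
  grind

theorem rankOf_append_singleton (t : List (QA S n)) (e : QA S n) :
    rankOf (t ++ [e]) =
      rankOf t + if (queryGraph t).Reachable e.1.1 e.2 then 0 else 1 := by
  rw [rankOf_eq_rankOn, rankOf_eq_rankOn, queryVertices_append_singleton,
    queryGraph_append_singleton]
  convert rankOn_sup_edge_insert fun _ _ => mem_queryVertices_of_adj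

def seenVertices (t : List (QA S n)) (x : Fin n) : List (Fin n) :=
  x :: t.flatMap fun e => [e.1.1, e.2]

theorem length_seenVertices (t : List (QA S n)) (x : Fin n) :
    (seenVertices t x).length = 2 * t.length + 1 := by
  simp [seenVertices, List.length_flatMap, mul_comm]

theorem mem_seenVertices_of_reachable {t : List (QA S n)} {x a : Fin n}
    (h : (queryGraph t).Reachable x a) : a ∈ seenVertices t x := by
  obtain ⟨_ | ⟨hadj, _⟩⟩ := h.symm
  · exact List.mem_cons_self
  · have := mem_queryVertices_of_adj hadj
    simp only [queryVertices, mem_union, List.mem_toFinset, List.mem_map] at this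
    simp only [seenVertices, List.mem_cons, List.mem_flatMap]
    grind

noncomputable def encodeStep {q : ℕ} (t : List (QA S n)) (e : QA S n) (ht : t.length < q) :
    Fin n ⊕ Fin (2 * q) :=
  if h : (queryGraph t).Reachable e.1.1 e.2 then
    .inr ⟨(seenVertices t e.1.1).idxOf e.2, by
      have := List.idxOf_lt_length_iff.2 (mem_seenVertices_of_reachable h)
      rw [length_seenVertices] at this
      omega⟩
  else .inl e.2

theorem isLeft_encodeStep {q : ℕ} (t : List (QA S n)) (e : QA S n) (ht : t.length < q) :
    (encodeStep t e ht).isLeft ↔ ¬(queryGraph t).Reachable e.1.1 e.2 := by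
  unfold encodeStep
  split_ifs <;> simp [*]

theorem encodeStep_injective {q : ℕ} {t t' : List (QA S n)} {e e' : QA S n}
    {ht : t.length < q} {ht' : t'.length < q} (htt' : t = t') (hq : e.1 = e'.1)
    (h : encodeStep t e ht = encodeStep t' e' ht') : e = e' := by
  subst htt'
  obtain ⟨x, a⟩ := e
  obtain ⟨x', a'⟩ := e'
  obtain rfl : x = x' := hq
  unfold encodeStep at h
  split_ifs at h with h₁ h₂
  · simpa [List.idxOf_inj (mem_seenVertices_of_reachable h₁)] using h
  · simpa using h

end Transcript

section Run

variable {S : Type*} {n : ℕ} (next : List (QA S n) → Fin n × (S × Bool))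
  (G : S → Equiv.Perm (Fin n))

def runStep (k : ℕ) : QA S n :=
  (next (runTranscript next G k), answerQ G (next (runTranscript next G k)))

theorem runTranscript_succ (k : ℕ) :
    runTranscript next G (k + 1) = runTranscript next G k ++ [runStep next G k] := rfl

theorem length_runTranscript (k : ℕ) : (runTranscript next G k).length = k := by
  induction k with
  | zero => rfl
  | succ k ih => simp [runTranscript_succ, ih]

theorem rankOf_runTranscript (q : ℕ) :
    rankOf (runTranscript next G q) = ∑ k ∈ range q,
      if (queryGraph (runTranscript next G k)).Reachable
        (runStep next G k).1.1 (runStep next G k).2 then 0 else 1 := by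
  induction q with
  | zero => rfl
  | succ q ih => rw [runTranscript_succ, rankOf_append_singleton, ih, sum_range_succ]

noncomputable def stepCode {q : ℕ} (k : Fin q) : Fin n ⊕ Fin (2 * q) :=
  encodeStep (runTranscript next G k) (runStep next G k)
    ((length_runTranscript next G k).trans_lt k.2)

theorem card_isLeft_stepCode (q : ℕ) :
    #{k : Fin q | (stepCode next G k).isLeft} = rankOf (runTranscript next G q) := by
  rw [rankOf_runTranscript, card_filter, ← Fin.sum_univ_eq_sum_range]
  refine sum_congr rfl fun k _ => ?_
  simp only [stepCode, isLeft_encodeStep]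
  split_ifs <;> rfl

theorem runTranscript_eq_of_stepCode_eq {G₁ G₂ : S → Equiv.Perm (Fin n)} {q : ℕ}
    (h : stepCode (q := q) next G₁ = stepCode next G₂) :
    runTranscript next G₁ q = runTranscript next G₂ q := by
  suffices ∀ k ≤ q, runTranscript next G₁ k = runTranscript next G₂ k from this q le_rfl
  intro k
  induction k with
  | zero => exact fun _ => rfl
  | succ k ih =>
    intro hk
    have hrun := ih (by omega)
    rw [runTranscript_succ, runTranscript_succ, hrun,
      encodeStep_injective hrun (by simp only [runStep, hrun]) (congrFun h ⟨k, hk⟩)]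

end Run

theorem stmt_17_general {S : Type*} {n : ℕ}
    (next : List (QA S n) → Fin n × (S × Bool)) (q r : ℕ) :
    Nat.card {t : List (QA S n) |
        (∃ G : S → Equiv.Perm (Fin n), runTranscript next G q = t) ∧ rankOf t = r}
      ≤ Nat.choose q r * n ^ r * (2 * q) ^ (q - r) := by
  let code (t : {t : List (QA S n) |
      (∃ G : S → Equiv.Perm (Fin n), runTranscript next G q = t) ∧ rankOf t = r}) :
      {f : Fin q → Fin n ⊕ Fin (2 * q) // #{i | (f i).isLeft} = r} :=
    ⟨stepCode next t.2.1.choose, by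
      rw [card_isLeft_stepCode, t.2.1.choose_spec, t.2.2]⟩
  have hcode : Function.Injective code := fun t₁ t₂ h => Subtype.ext <| by
    rw [← t₁.2.1.choose_spec, ← t₂.2.1.choose_spec]
    exact runTranscript_eq_of_stepCode_eq next (congrArg Subtype.val h)
  calc _ ≤ Nat.card {f : Fin q → Fin n ⊕ Fin (2 * q) // #{i | (f i).isLeft} = r} :=
        Nat.card_le_card_of_injective code hcode
    _ = _ := by
      rw [Nat.card_eq_fintype_card, Fintype.card_subtype, card_filter_card_isLeft_eq]
      simp

/-- For a deterministic oracle machine making exactly `q` queries on `S`-graphs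
on `[n]`, the number of query transcripts of rank `r` that can arise is at most
`C(q,r) · n^r · (2q)^{q-r}`. -/
theorem stmt_17 {S : Type*} [Fintype S] [DecidableEq S] {n : ℕ}
    (next : List (QA S n) → Fin n × (S × Bool)) (q r : ℕ) :
    Nat.card {t : List (QA S n) |
        (∃ G : S → Equiv.Perm (Fin n), runTranscript next G q = t) ∧ rankOf t = r}
      ≤ Nat.choose q r * n ^ r * (2 * q) ^ (q - r) :=
  stmt_17_general next q r
end
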